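/- arXiv:2405.17867 — 6 statements merged into one kernel-verified Lean document; each statement's English description precedes it below -/
import Mathlib

section
/- Let G = (V, A) be a finite, weakly connected directed graph with strictly increasing, odd, continuous potential functions Φ_a. If (q, π) and (q', π') both satisfy the mass flow conservation constraints for the same balanced load scenario d and satisfy π_u − π_v = Φ_a(q_a) (resp. π'_u − π'_v = Φ_a(q'_a)) on every arc a = (u,v), then q = q' and there exists η ∈ ℝ such that π' = π + η·𝟙, where 𝟙 is the all-ones vector. -/
/-- Mass flow conservation of a flow `q` with respect to a load scenario `d`. -/
def FlowCons {V A : Type} [Fintype A] [DecidableEq V]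
    (src tgt : A → V) (q : A → ℝ) (d : V → ℝ) : Prop :=
  ∀ u : V,
    (∑ a : A, if tgt a = u then q a else 0) -
      (∑ a : A, if src a = u then q a else 0) = d u

/-- Potential coupling `π_u − π_v = Φ_a(q_a)` on every arc. -/
def PotCoup {V A : Type} (src tgt : A → V) (Φ : A → ℝ → ℝ)
    (q : A → ℝ) (π : V → ℝ) : Prop :=
  ∀ a : A, π (src a) - π (tgt a) = Φ a (q a)

/-- Weak connectivity of the directed graph. -/
def WeakConn {V A : Type} (src tgt : A → V) : Prop :=
  ∀ u v : V, Relation.ReflTransGen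
    (fun x y => ∃ a : A, (src a = x ∧ tgt a = y) ∨ (src a = y ∧ tgt a = x)) u v

/-- On a weakly connected graph, a potential-based flow for a balanced load
scenario has unique flows, and the potentials are unique up to a constant
shift. -/
theorem potential_flow_unique {V A : Type} [Fintype V] [Fintype A] [DecidableEq V]
    (src tgt : A → V) (Φ : A → ℝ → ℝ)
    (hcont : ∀ a, Continuous (Φ a)) (hmono : ∀ a, StrictMono (Φ a))
    (hodd : ∀ a (x : ℝ), Φ a (-x) = -Φ a x)
    (hconn : WeakConn src tgt)
    (d : V → ℝ) (hbal : ∑ u : V, d u = 0)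
    (q q' : A → ℝ) (π π' : V → ℝ)
    (hq : FlowCons src tgt q d) (hq' : FlowCons src tgt q' d)
    (hπ : PotCoup src tgt Φ q π) (hπ' : PotCoup src tgt Φ q' π') :
    q = q' ∧ ∃ η : ℝ, ∀ u : V, π' u = π u + η := by
  classical
  set f : V → ℝ := fun u => π u - π' u with hf
  have key : ∀ a, Φ a (q a) - Φ a (q' a) = f (src a) - f (tgt a) := by
    intro a
    have h1 := hπ a
    have h2 := hπ' a
    simp only [hf]
    linarith
  -- net flow differences agree at every node
  have hnet : ∀ u, (∑ a : A, if src a = u then (q a - q' a) else 0)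
      = (∑ a : A, if tgt a = u then (q a - q' a) else 0) := by
    intro u
    have h1 := hq u
    have h2 := hq' u
    have e1 : (∑ a : A, if tgt a = u then (q a - q' a) else 0)
        = (∑ a : A, if tgt a = u then q a else 0)
          - (∑ a : A, if tgt a = u then q' a else 0) := by
      rw [← Finset.sum_sub_distrib]
      exact Finset.sum_congr rfl (fun a _ => by split <;> ring)
    have e2 : (∑ a : A, if src a = u then (q a - q' a) else 0)
        = (∑ a : A, if src a = u then q a else 0)
          - (∑ a : A, if src a = u then q' a else 0) := by
      rw [← Finset.sum_sub_distrib]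
      exact Finset.sum_congr rfl (fun a _ => by split <;> ring)
    rw [e1, e2]; linarith
  have hswap : ∀ (g : A → V),
      ∑ u : V, f u * (∑ a : A, if g a = u then (q a - q' a) else 0)
      = ∑ a : A, (q a - q' a) * f (g a) := by
    intro g
    simp_rw [Finset.mul_sum, mul_ite, mul_zero]
    rw [Finset.sum_comm]
    refine Finset.sum_congr rfl (fun a _ => ?_)
    rw [Finset.sum_ite_eq Finset.univ (g a) (fun u => f u * (q a - q' a))]
    simp [mul_comm]
  have hSzero : ∑ a : A, (q a - q' a) * (Φ a (q a) - Φ a (q' a)) = 0 := by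
    calc ∑ a : A, (q a - q' a) * (Φ a (q a) - Φ a (q' a))
        = ∑ a : A, ((q a - q' a) * f (src a) - (q a - q' a) * f (tgt a)) := by
          refine Finset.sum_congr rfl (fun a _ => ?_)
          rw [key a]; ring
      _ = (∑ a : A, (q a - q' a) * f (src a)) - ∑ a : A, (q a - q' a) * f (tgt a) := by
          rw [Finset.sum_sub_distrib]
      _ = (∑ u : V, f u * (∑ a : A, if src a = u then (q a - q' a) else 0))
          - ∑ u : V, f u * (∑ a : A, if tgt a = u then (q a - q' a) else 0) := by
          rw [hswap src, hswap tgt]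
      _ = 0 := by
          rw [← Finset.sum_sub_distrib]
          refine Finset.sum_eq_zero (fun u _ => ?_)
          rw [hnet u]; ring
  have hterm_nonneg : ∀ a : A, 0 ≤ (q a - q' a) * (Φ a (q a) - Φ a (q' a)) := by
    intro a
    rcases lt_trichotomy (q a) (q' a) with h | h | h
    · have := (hmono a) h
      nlinarith
    · simp [h]
    · have := (hmono a) h
      nlinarith
  have hterm_zero : ∀ a : A, (q a - q' a) * (Φ a (q a) - Φ a (q' a)) = 0 := by
    intro a
    have := (Finset.sum_eq_zero_iff_of_nonneg
      (fun a _ => hterm_nonneg a)).mp hSzero a (Finset.mem_univ a)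
    exact this
  have hqq : q = q' := by
    funext a
    by_contra hne
    rcases lt_or_gt_of_ne hne with h | h
    · have := (hmono a) h
      have hz := hterm_zero a
      nlinarith
    · have := (hmono a) h
      have hz := hterm_zero a
      nlinarith
  refine ⟨hqq, ?_⟩
  -- f is constant along arcs
  have hstep : ∀ a : A, f (src a) = f (tgt a) := by
    intro a
    have := key a
    rw [hqq] at this
    simp at this
    linarith
  cases isEmpty_or_nonempty V with
  | inl h => exact ⟨0, fun u => (h.false u).elim⟩
  | inr h =>
    obtain ⟨u0⟩ := h
    refine ⟨π' u0 - π u0, fun u => ?_⟩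
    have hc : f u0 = f u := by
      have hrel := hconn u0 u
      induction hrel with
      | refl => rfl
      | tail _ hxy ih =>
        obtain ⟨a, hor⟩ := hxy
        rcases hor with ⟨h1, h2⟩ | ⟨h1, h2⟩
        · rw [ih, ← h1, ← h2, hstep a]
        · rw [ih, ← h1, ← h2, hstep a]
    simp only [hf] at hc
    linarith
end

section
/- Let G = (V, A) be a finite, weakly connected directed graph with strictly increasing, odd, continuous potential functions Φ_a that are additionally surjective. Then for every balanced load scenario d ∈ ℝ^V (i.e., ∑_u d_u = 0), there exist flows q ∈ ℝ^A and potentials π ∈ ℝ^V satisfying mass flow conservation with respect to d and the potential coupling π_u − π_v = Φ_a(q_a) for all arcs a = (u,v). -/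
open Finset

theorem OrderIso.odd_symm {α β : Type*} [Preorder α] [Preorder β] [Neg α] [Neg β] (e : α ≃o β)
    (he : Function.Odd e) : Function.Odd e.symm := fun y =>
  e.symm_apply_eq.2 (by rw [he, e.apply_symm_apply])

theorem intervalIntegral_zero_abs_of_odd {ψ : ℝ → ℝ} (hodd : Function.Odd ψ) (t : ℝ) :
    ∫ s in 0..|t|, ψ s = ∫ s in 0..t, ψ s := by
  rcases abs_choice t with h | h <;> rw [h]
  have := intervalIntegral.integral_comp_neg (a := 0) (b := t) ψ
  rw [neg_zero, intervalIntegral.integral_symm 0 (-t)] at this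
  simp only [hodd.eq, intervalIntegral.integral_neg] at this
  linarith

theorem mul_sub_le_intervalIntegral_of_monotone {ψ : ℝ → ℝ} (hmono : Monotone ψ) (h0 : 0 ≤ ψ 0)
    {T r : ℝ} (hT : 0 ≤ T) (hr : 0 ≤ r) : ψ T * (r - T) ≤ ∫ s in 0..r, ψ s := by
  have hnonneg : ∀ x, 0 ≤ x → 0 ≤ ∫ s in 0..x, ψ s := fun x hx =>
    intervalIntegral.integral_nonneg hx fun s hs => h0.trans (hmono hs.1)
  rcases le_or_gt T r with hTr | hrT
  · have htail : ψ T * (r - T) ≤ ∫ s in T..r, ψ s := by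
      simpa [mul_comm] using intervalIntegral.integral_mono_on (μ := MeasureTheory.volume)
        (f := fun _ => ψ T) hTr intervalIntegrable_const hmono.intervalIntegrable
        fun s hs => hmono hs.1
    rw [← intervalIntegral.integral_add_adjacent_intervals hmono.intervalIntegrable
      hmono.intervalIntegrable]
    linarith [hnonneg T hT]
  · nlinarith [hnonneg r hr, h0.trans (hmono hT)]

theorem exists_mul_abs_sub_le_intervalIntegral {ψ : ℝ → ℝ} (hmono : Monotone ψ)
    (hodd : Function.Odd ψ) (hψ : ¬BddAbove (Set.range ψ)) (α : ℝ) :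
    ∃ β, ∀ t, α * |t| - β ≤ ∫ s in 0..t, ψ s := by
  obtain ⟨_, ⟨T, rfl⟩, hT⟩ := not_bddAbove_iff.1 hψ α
  have hα : α ≤ ψ (max T 0) := hT.le.trans (hmono (le_max_left T 0))
  refine ⟨ψ (max T 0) * max T 0, fun t => ?_⟩
  rw [← intervalIntegral_zero_abs_of_odd hodd]
  have := mul_sub_le_intervalIntegral_of_monotone hmono hodd.map_zero.ge (le_max_right T 0)
    (abs_nonneg t)
  nlinarith [mul_le_mul_of_nonneg_right hα (abs_nonneg t)]

section Network

variable {V A : Type} (src tgt : A → V)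

theorem exists_abs_sub_le_of_reflTransGen [Fintype A] {u v : V}
    (h : Relation.ReflTransGen
      (fun x y => ∃ a : A, (src a = x ∧ tgt a = y) ∨ (src a = y ∧ tgt a = x)) u v) :
    ∃ n : ℕ, ∀ π : V → ℝ, |π u - π v| ≤ n * ∑ a, |π (src a) - π (tgt a)| := by
  induction h with
  | refl => exact ⟨0, fun π => by simp⟩
  | @tail w x _ harc ih =>
    obtain ⟨n, hn⟩ := ih
    refine ⟨n + 1, fun π => ?_⟩
    have hle : ∀ a, |π (src a) - π (tgt a)| ≤ ∑ a, |π (src a) - π (tgt a)| := fun a =>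
      single_le_sum (f := fun a => |π (src a) - π (tgt a)|) (fun _ _ => abs_nonneg _) (mem_univ a)
    have hstep : |π w - π x| ≤ ∑ a, |π (src a) - π (tgt a)| := by
      obtain ⟨a, ⟨rfl, rfl⟩ | ⟨rfl, rfl⟩⟩ := harc
      · exact hle a
      · exact abs_sub_comm (π (tgt a)) (π (src a)) ▸ hle a
    push_cast
    linarith [abs_sub_le (π u) (π w) (π x), hn π]

theorem WeakConn.exists_abs_sub_le [Fintype V] [Fintype A] (hconn : WeakConn src tgt) :
    ∃ C : ℕ, ∀ (π : V → ℝ) (u v : V),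
      |π u - π v| ≤ C * ∑ a, |π (src a) - π (tgt a)| := by
  choose N hN using fun p : V × V => exists_abs_sub_le_of_reflTransGen src tgt (hconn p.1 p.2)
  refine ⟨∑ p, N p, fun π u v => (hN (u, v) π).trans ?_⟩
  gcongr
  exact single_le_sum (f := N) (fun _ _ => Nat.zero_le _) (mem_univ (u, v))

variable [Fintype V] [Fintype A]

def energy (Ψ : A → ℝ → ℝ) (d π : V → ℝ) : ℝ :=
  ∑ a, Ψ a (π (src a) - π (tgt a)) + ∑ u, d u * π u

theorem continuous_energy {Ψ : A → ℝ → ℝ} (hΨ : ∀ a, Continuous (Ψ a)) (d : V → ℝ) :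
    Continuous (energy src tgt Ψ d) := by
  unfold energy
  fun_prop

theorem energy_sub_const (Ψ : A → ℝ → ℝ) {d : V → ℝ} (hbal : ∑ u, d u = 0) (π : V → ℝ)
    (c : ℝ) : energy src tgt Ψ d (fun v => π v - c) = energy src tgt Ψ d π := by
  simp only [energy, sub_sub_sub_cancel_right, mul_sub, sum_sub_distrib, ← sum_mul, hbal,
    zero_mul, sub_zero]

theorem isBounded_energy_sublevel (hconn : WeakConn src tgt) {Ψ : A → ℝ → ℝ}
    (hΨ : ∀ a α, ∃ β, ∀ t, α * |t| - β ≤ Ψ a t) (d : V → ℝ) (r : V) (c : ℝ) :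
    Bornology.IsBounded {π : V → ℝ | π r = 0 ∧ energy src tgt Ψ d π ≤ c} := by
  obtain ⟨C, hC⟩ := hconn.exists_abs_sub_le
  set K := ∑ u, |d u|
  choose β hβ using fun a => hΨ a (K * C + 1)
  refine isBounded_iff_forall_norm_le.2 ⟨C * (c + ∑ a, β a), fun π ⟨hr, hπ⟩ => ?_⟩
  set M := ∑ a, |π (src a) - π (tgt a)|
  have hπ_le : ∀ u, |π u| ≤ C * M := fun u => by simpa [hr] using hC π u r
  have harcs : (K * C + 1) * M - ∑ a, β a ≤ ∑ a, Ψ a (π (src a) - π (tgt a)) := by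
    rw [mul_sum, ← sum_sub_distrib]
    exact sum_le_sum fun a _ => hβ a _
  have hload : |∑ u, d u * π u| ≤ K * (C * M) := by
    refine (abs_sum_le_sum_abs _ _).trans ?_
    rw [sum_mul]
    exact sum_le_sum fun u _ => by
      rw [abs_mul]
      exact mul_le_mul_of_nonneg_left (hπ_le u) (abs_nonneg _)
  have hM : M ≤ c + ∑ a, β a := by
    unfold energy at hπ
    nlinarith [neg_le_of_abs_le hload]
  have hCM : (C : ℝ) * M ≤ C * (c + ∑ a, β a) := by gcongr
  refine (pi_norm_le_iff_of_nonneg ((abs_nonneg _).trans ((hπ_le r).trans hCM))).2 fun u => ?_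
  exact (hπ_le u).trans hCM

theorem exists_forall_energy_le (hconn : WeakConn src tgt) {Ψ : A → ℝ → ℝ}
    (hΨc : ∀ a, Continuous (Ψ a)) (hΨ : ∀ a α, ∃ β, ∀ t, α * |t| - β ≤ Ψ a t) {d : V → ℝ}
    (hbal : ∑ u, d u = 0) : ∃ π, ∀ π', energy src tgt Ψ d π ≤ energy src tgt Ψ d π' := by
  rcases isEmpty_or_nonempty V with hV | hV
  · exact ⟨0, fun π' => (congrArg _ (Subsingleton.elim π' 0)).ge⟩
  obtain ⟨r⟩ := hV
  have hcompact :
      IsCompact {π : V → ℝ | π r = 0 ∧ energy src tgt Ψ d π ≤ energy src tgt Ψ d 0} :=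
    Metric.isCompact_of_isClosed_isBounded
      ((isClosed_eq (continuous_apply r) continuous_const).inter
        (isClosed_le (continuous_energy src tgt hΨc d) continuous_const))
      (isBounded_energy_sublevel src tgt hconn hΨ d r _)
  obtain ⟨π, -, hπ⟩ := hcompact.exists_isMinOn ⟨0, rfl, le_rfl⟩
    (continuous_energy src tgt hΨc d).continuousOn
  refine ⟨π, fun π' => ?_⟩
  rw [← energy_sub_const src tgt Ψ hbal π' (π' r)]
  by_cases h : energy src tgt Ψ d (fun v => π' v - π' r) ≤ energy src tgt Ψ d 0
  · exact hπ ⟨sub_self _, h⟩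
  · exact (hπ ⟨rfl, le_rfl⟩).trans (not_le.1 h).le

theorem hasDerivAt_energy_line {Ψ ψ : A → ℝ → ℝ} (hΨ : ∀ a t, HasDerivAt (Ψ a) (ψ a t) t)
    (d π w : V → ℝ) :
    HasDerivAt (fun c : ℝ => energy src tgt Ψ d (π + c • w))
      (∑ a, ψ a (π (src a) - π (tgt a)) * (w (src a) - w (tgt a)) + ∑ u, d u * w u) 0 := by
  have hline : ∀ x y : ℝ, HasDerivAt (fun c : ℝ => x + c * y) y 0 := fun x y => by
    simpa using ((hasDerivAt_id (0 : ℝ)).mul_const y).const_add x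
  simp only [energy, Pi.add_apply, Pi.smul_apply, smul_eq_mul]
  refine (HasDerivAt.fun_sum fun a _ => ?_).add (HasDerivAt.fun_sum fun u _ => ?_)
  · exact (hΨ a (π (src a) - π (tgt a))).comp_of_eq 0
      ((hline _ _).fun_sub (hline _ _)) (by simp)
  · exact (hline (π u) (w u)).const_mul (d u)

theorem flowCons_of_forall_energy_le [DecidableEq V] {Ψ ψ : A → ℝ → ℝ}
    (hΨ : ∀ a t, HasDerivAt (Ψ a) (ψ a t) t) {d π : V → ℝ}
    (hmin : ∀ π', energy src tgt Ψ d π ≤ energy src tgt Ψ d π') :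
    FlowCons src tgt (fun a => ψ a (π (src a) - π (tgt a))) d := by
  intro u
  have hlocal : IsLocalMin (fun c : ℝ => energy src tgt Ψ d (π + c • Pi.single u 1)) 0 :=
    Filter.Eventually.of_forall fun c => by simpa using hmin _
  have := hlocal.hasDerivAt_eq_zero (hasDerivAt_energy_line src tgt hΨ d π (Pi.single u 1))
  simp only [Pi.single_apply, mul_sub, mul_ite, mul_one, mul_zero, sum_sub_distrib,
    sum_ite_eq', mem_univ, if_true] at this
  linarith

end Network

theorem potential_flow_exists_general {V A : Type} [Fintype V] [Fintype A] [DecidableEq V]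
    (src tgt : A → V) (Φ : A → ℝ → ℝ)
    (hmono : ∀ a, StrictMono (Φ a))
    (hodd : ∀ a (x : ℝ), Φ a (-x) = -Φ a x)
    (hsurj : ∀ a, Function.Surjective (Φ a))
    (hconn : WeakConn src tgt)
    (d : V → ℝ) (hbal : ∑ u : V, d u = 0) :
    ∃ (q : A → ℝ) (π : V → ℝ), FlowCons src tgt q d ∧ PotCoup src tgt Φ q π := by
  let ψ a : ℝ ≃o ℝ := ((hmono a).orderIsoOfSurjective (Φ a) (hsurj a)).symm
  have hΨ : ∀ a t, HasDerivAt (fun t => ∫ s in 0..t, ψ a s) (ψ a t) t := fun a t =>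
    ((ψ a).continuous.integral_hasStrictDerivAt 0 t).hasDerivAt
  have hgrowth : ∀ a α, ∃ β, ∀ t, α * |t| - β ≤ ∫ s in 0..t, ψ a s := fun a =>
    exists_mul_abs_sub_le_intervalIntegral (ψ a).monotone (OrderIso.odd_symm _ (hodd a))
      ((ψ a).surjective.range_eq ▸ not_bddAbove_univ)
  obtain ⟨π, hπ⟩ := exists_forall_energy_le src tgt hconn
    (fun a => continuous_iff_continuousAt.2 fun t => (hΨ a t).continuousAt) hgrowth hbal
  exact ⟨_, π, flowCons_of_forall_energy_le src tgt hΨ hπ, fun a =>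
    (StrictMono.orderIsoOfSurjective_self_symm_apply (Φ a) (hmono a) (hsurj a) _).symm⟩

/-- On a weakly connected graph with continuous, strictly increasing, odd and
surjective potential functions, every balanced load scenario admits a
potential-based flow. -/
theorem potential_flow_exists {V A : Type} [Fintype V] [Fintype A] [DecidableEq V]
    (src tgt : A → V) (Φ : A → ℝ → ℝ)
    (hcont : ∀ a, Continuous (Φ a)) (hmono : ∀ a, StrictMono (Φ a))
    (hodd : ∀ a (x : ℝ), Φ a (-x) = -Φ a x)
    (hsurj : ∀ a, Function.Surjective (Φ a))
    (hconn : WeakConn src tgt)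
    (d : V → ℝ) (hbal : ∑ u : V, d u = 0) :
    ∃ (q : A → ℝ) (π : V → ℝ), FlowCons src tgt q d ∧ PotCoup src tgt Φ q π :=
  potential_flow_exists_general src tgt Φ hmono hodd hsurj hconn d hbal
end

section
/- Let G = (V, A) be a finite, weakly connected directed graph with continuous, strictly increasing, odd potential functions Φ_a, potential bounds π⁻_u ≤ π⁺_u for each node, and flow bounds q⁻_a ≤ q⁺_a for each arc. Let U be a non-empty compact set of balanced load scenarios. Define φ_{u,v} := sup over d ∈ U and potential-based flows (q,π) for d of (π_u − π_v); q̲_a := inf over d ∈ U and potential-based flows (q,π) for d of q_a; and q̄_a := sup of q_a analogously (all without imposing the potential and flow bounds). Suppose every d ∈ U admits at least one potential-based flow. Then the following are equivalent: (i) for every d ∈ U there exists a potential-based flow (q,π) with π⁻_u ≤ π_u ≤ π⁺_u for all u and q⁻_a ≤ q_a ≤ q⁺_a for all a; (ii) φ_{u,v} ≤ π⁺_u − π⁻_v for all pairs of distinct nodes (u,v), and q̲_a ≥ q⁻_a and q̄_a ≤ q⁺_a for all arcs a. -/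
/-!
Potential-based flows are unique up to a common shift of the potentials: if `(q₁, π₁)` and
`(q₂, π₂)` both serve `d`, then `q₁ - q₂` is a circulation, so summing
`(Φ_a(q₁ a) - Φ_a(q₂ a)) (q₁ a - q₂ a)` over the arcs telescopes to zero; each term is
nonnegative by monotonicity of `Φ_a`, hence zero, so `q₁ = q₂`, and then `π₁ - π₂` is constant
along arcs, hence constant by connectivity. So the worst-case quantities are just the values of
the unique flow and potential differences; conversely, the bounds on potential differences say
exactly that some shift of the potentials fits into the boxes `[π⁻_u, π⁺_u]`.
-/

open Finset

lemma WeakConn.eq_of_forall_arc {V A β : Type} {src tgt : A → V} (hconn : WeakConn src tgt)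
    {f : V → β} (hf : ∀ a, f (src a) = f (tgt a)) (u v : V) : f u = f v := by
  induction hconn u v with
  | refl => rfl
  | tail _ hstep ih =>
    obtain ⟨a, ⟨rfl, rfl⟩ | ⟨rfl, rfl⟩⟩ := hstep
    · exact ih.trans (hf a)
    · exact ih.trans (hf a).symm

section Flows

variable {V A : Type} [Fintype A] [DecidableEq V] {src tgt : A → V}

lemma FlowCons.sub {q₁ q₂ : A → ℝ} {d₁ d₂ : V → ℝ} (h₁ : FlowCons src tgt q₁ d₁)
    (h₂ : FlowCons src tgt q₂ d₂) : FlowCons src tgt (q₁ - q₂) (d₁ - d₂) := by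
  intro u
  have key : ∀ f : A → V, (∑ a, if f a = u then (q₁ - q₂) a else 0) =
      (∑ a, if f a = u then q₁ a else 0) - ∑ a, if f a = u then q₂ a else 0 := by
    intro f
    rw [← sum_sub_distrib]
    exact sum_congr rfl fun a _ => by split_ifs <;> simp
  rw [key, key, Pi.sub_apply, ← h₁ u, ← h₂ u]
  ring

variable [Fintype V]

lemma sum_comp_mul_eq_sum_mul_sum_ite (f : A → V) (ρ : V → ℝ) (r : A → ℝ) :
    ∑ a, ρ (f a) * r a = ∑ u, ρ u * ∑ a, if f a = u then r a else 0 := by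
  simp only [mul_sum, mul_ite, mul_zero]
  rw [sum_comm]
  simp

/-- Tellegen's identity. -/
lemma FlowCons.sum_potential_drop_mul {q : A → ℝ} {d : V → ℝ} (h : FlowCons src tgt q d)
    (ρ : V → ℝ) : ∑ a, (ρ (src a) - ρ (tgt a)) * q a = -∑ u, ρ u * d u := by
  simp only [sub_mul, sum_sub_distrib]
  rw [sum_comp_mul_eq_sum_mul_sum_ite src, sum_comp_mul_eq_sum_mul_sum_ite tgt, ← sum_sub_distrib,
    ← sum_neg_distrib]
  exact sum_congr rfl fun u _ => by rw [← h u]; ring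

lemma sub_mul_sub_pos_of_strictMono {f : ℝ → ℝ} (hf : StrictMono f) {x y : ℝ} (hxy : x ≠ y) :
    0 < (f x - f y) * (x - y) := by
  rcases hxy.lt_or_gt with h | h
  · exact mul_pos_of_neg_of_neg (sub_neg.2 (hf h)) (sub_neg.2 h)
  · exact mul_pos (sub_pos.2 (hf h)) (sub_pos.2 h)

lemma sub_mul_sub_nonneg_of_strictMono {f : ℝ → ℝ} (hf : StrictMono f) (x y : ℝ) :
    0 ≤ (f x - f y) * (x - y) := by
  rcases eq_or_ne x y with rfl | hxy
  · simp
  · exact (sub_mul_sub_pos_of_strictMono hf hxy).le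

theorem flow_eq_of_potentialBased {Φ : A → ℝ → ℝ} (hmono : ∀ a, StrictMono (Φ a))
    {d : V → ℝ} {q₁ q₂ : A → ℝ} {π₁ π₂ : V → ℝ}
    (hf₁ : FlowCons src tgt q₁ d) (hp₁ : PotCoup src tgt Φ q₁ π₁)
    (hf₂ : FlowCons src tgt q₂ d) (hp₂ : PotCoup src tgt Φ q₂ π₂) : q₁ = q₂ := by
  have hdrop : ∀ a, (π₁ - π₂) (src a) - (π₁ - π₂) (tgt a) = Φ a (q₁ a) - Φ a (q₂ a) := by
    intro a
    simp only [Pi.sub_apply]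
    linarith [hp₁ a, hp₂ a]
  have hcirc : FlowCons src tgt (q₁ - q₂) 0 := sub_self d ▸ hf₁.sub hf₂
  have hsum : ∑ a, (Φ a (q₁ a) - Φ a (q₂ a)) * (q₁ a - q₂ a) = 0 := by
    calc ∑ a, (Φ a (q₁ a) - Φ a (q₂ a)) * (q₁ a - q₂ a)
        = ∑ a, ((π₁ - π₂) (src a) - (π₁ - π₂) (tgt a)) * (q₁ - q₂) a :=
          sum_congr rfl fun a _ => by rw [hdrop a, Pi.sub_apply]
      _ = 0 := by rw [hcirc.sum_potential_drop_mul]; simp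
  have hzero := (sum_eq_zero_iff_of_nonneg fun a _ =>
    sub_mul_sub_nonneg_of_strictMono (hmono a) (q₁ a) (q₂ a)).1 hsum
  funext a
  by_contra hne
  exact (sub_mul_sub_pos_of_strictMono (hmono a) hne).ne' (hzero a (mem_univ a))

theorem potential_sub_eq_of_potentialBased {Φ : A → ℝ → ℝ} (hmono : ∀ a, StrictMono (Φ a))
    (hconn : WeakConn src tgt) {d : V → ℝ} {q₁ q₂ : A → ℝ} {π₁ π₂ : V → ℝ}
    (hf₁ : FlowCons src tgt q₁ d) (hp₁ : PotCoup src tgt Φ q₁ π₁)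
    (hf₂ : FlowCons src tgt q₂ d) (hp₂ : PotCoup src tgt Φ q₂ π₂) (u v : V) :
    π₁ u - π₁ v = π₂ u - π₂ v := by
  obtain rfl := flow_eq_of_potentialBased hmono hf₁ hp₁ hf₂ hp₂
  have hconst := hconn.eq_of_forall_arc (f := π₁ - π₂) fun a => by
    simp only [Pi.sub_apply]
    linarith [hp₁ a, hp₂ a]
  exact sub_eq_sub_iff_sub_eq_sub.1 (hconst u v)

end Flows

lemma PotCoup.add_const {V A : Type} {src tgt : A → V} {Φ : A → ℝ → ℝ} {q : A → ℝ}
    {π : V → ℝ} (h : PotCoup src tgt Φ q π) (c : ℝ) :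
    PotCoup src tgt Φ q (π + Function.const V c) := fun a => by
  simp [← h a]

lemma exists_add_const_mem_Icc {V : Type} [Finite V] {lo hi p : V → ℝ}
    (h : ∀ u v, p u - p v ≤ hi u - lo v) :
    ∃ c : ℝ, ∀ u, lo u ≤ p u + c ∧ p u + c ≤ hi u := by
  cases isEmpty_or_nonempty V
  · exact ⟨0, isEmptyElim⟩
  refine ⟨⨆ v, lo v - p v, fun u => ⟨?_, ?_⟩⟩
  · linarith [le_ciSup (Finite.bddAbove_range fun v => lo v - p v) u]
  · linarith [ciSup_le fun v => show lo v - p v ≤ hi u - p u by linarith [h u v]]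

theorem robust_feasibility_characterization_general
    {V A : Type} [Fintype V] [Fintype A] [DecidableEq V]
    (src tgt : A → V) (Φ : A → ℝ → ℝ)
    (hmono : ∀ a, StrictMono (Φ a))
    (hconn : WeakConn src tgt)
    (πlo πhi : V → ℝ) (hπb : ∀ u, πlo u ≤ πhi u)
    (qlo qhi : A → ℝ)
    (U : Set (V → ℝ))
    (hfeas : ∀ d ∈ U, ∃ (q : A → ℝ) (π : V → ℝ),
      FlowCons src tgt q d ∧ PotCoup src tgt Φ q π) :
    (∀ d ∈ U, ∃ (q : A → ℝ) (π : V → ℝ),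
        FlowCons src tgt q d ∧ PotCoup src tgt Φ q π ∧
        (∀ u : V, πlo u ≤ π u ∧ π u ≤ πhi u) ∧
        (∀ a : A, qlo a ≤ q a ∧ q a ≤ qhi a))
    ↔
    ((∀ u v : V, u ≠ v → ∀ d ∈ U, ∀ (q : A → ℝ) (π : V → ℝ),
        FlowCons src tgt q d → PotCoup src tgt Φ q π →
        π u - π v ≤ πhi u - πlo v) ∧
     (∀ a : A, ∀ d ∈ U, ∀ (q : A → ℝ) (π : V → ℝ),
        FlowCons src tgt q d → PotCoup src tgt Φ q π →
        qlo a ≤ q a ∧ q a ≤ qhi a)) := by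
  constructor
  · intro hrobust
    refine ⟨fun u v _ d hd q π hq hπ => ?_, fun a d hd q π hq hπ => ?_⟩ <;>
      obtain ⟨q', π', hq', hπ', hπbox, hqbox⟩ := hrobust d hd
    · rw [potential_sub_eq_of_potentialBased hmono hconn hq hπ hq' hπ' u v]
      linarith [(hπbox u).2, (hπbox v).1]
    · rw [flow_eq_of_potentialBased hmono hq hπ hq' hπ']
      exact hqbox a
  · rintro ⟨hpot, hflow⟩ d hd
    obtain ⟨q, π, hq, hπ⟩ := hfeas d hd
    have hdiff : ∀ u v, π u - π v ≤ πhi u - πlo v := fun u v => by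
      rcases eq_or_ne u v with rfl | huv
      · linarith [hπb u]
      · exact hpot u v huv d hd q π hq hπ
    obtain ⟨c, hc⟩ := exists_add_const_mem_Icc hdiff
    exact ⟨q, π + Function.const V c, hq, hπ.add_const c, hc, fun a => hflow a d hd q π hq hπ⟩

/-- Characterization of robust feasibility on a weakly connected graph:
every scenario of the uncertainty set admits a potential-based flow respecting
the potential and flow bounds if and only if the worst-case potential
differences stay below `π⁺_u − π⁻_v` for all pairs of distinct nodes and the
worst-case arc flows stay within the flow bounds (worst case taken over all
scenarios and all bound-free potential-based flows). -/
theorem robust_feasibility_characterization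
    {V A : Type} [Fintype V] [Fintype A] [DecidableEq V]
    (src tgt : A → V) (Φ : A → ℝ → ℝ)
    (hcont : ∀ a, Continuous (Φ a)) (hmono : ∀ a, StrictMono (Φ a))
    (hodd : ∀ a (x : ℝ), Φ a (-x) = -Φ a x)
    (hconn : WeakConn src tgt)
    (πlo πhi : V → ℝ) (hπb : ∀ u, πlo u ≤ πhi u)
    (qlo qhi : A → ℝ) (hqb : ∀ a, qlo a ≤ qhi a)
    (U : Set (V → ℝ)) (hUne : U.Nonempty) (hUcomp : IsCompact U)
    (hUbal : ∀ d ∈ U, ∑ u : V, d u = 0)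
    (hfeas : ∀ d ∈ U, ∃ (q : A → ℝ) (π : V → ℝ),
      FlowCons src tgt q d ∧ PotCoup src tgt Φ q π) :
    (∀ d ∈ U, ∃ (q : A → ℝ) (π : V → ℝ),
        FlowCons src tgt q d ∧ PotCoup src tgt Φ q π ∧
        (∀ u : V, πlo u ≤ π u ∧ π u ≤ πhi u) ∧
        (∀ a : A, qlo a ≤ q a ∧ q a ≤ qhi a))
    ↔
    ((∀ u v : V, u ≠ v → ∀ d ∈ U, ∀ (q : A → ℝ) (π : V → ℝ),
        FlowCons src tgt q d → PotCoup src tgt Φ q π →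
        π u - π v ≤ πhi u - πlo v) ∧
     (∀ a : A, ∀ d ∈ U, ∀ (q : A → ℝ) (π : V → ℝ),
        FlowCons src tgt q d → PotCoup src tgt Φ q π →
        qlo a ≤ q a ∧ q a ≤ qhi a)) :=
  robust_feasibility_characterization_general src tgt Φ hmono hconn πlo πhi hπb qlo qhi U hfeas
end

section
/- Let G = (V, A) be a finite, weakly connected directed graph with continuous, strictly increasing, odd potential functions Φ_a. Partition V into sources V₊, sinks V₋, and inner nodes V₀, and let d be a balanced load scenario with d_u ≤ 0 for u ∈ V₊ (injection), d_u ≥ 0 for u ∈ V₋ (withdrawal), d_u = 0 for u ∈ V₀, and d ≠ 0. If (q, π) is a potential-based flow for d, then there exists a source node w ∈ V₊ with π_w = max_{v ∈ V} π_v, and there exists a sink node u ∈ V₋ with π_u = min_{v ∈ V} π_v. -/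
lemma key_max {V A : Type} [Fintype V] [Fintype A] [DecidableEq V]
    (src tgt : A → V) (Φ : A → ℝ → ℝ) (hmono : ∀ a, StrictMono (Φ a))
    (hodd : ∀ a (x : ℝ), Φ a (-x) = -Φ a x)
    (hconn : WeakConn src tgt)
    (Vp Vm V0 : Finset V)
    (hcover : ∀ u : V, u ∈ Vp ∨ u ∈ Vm ∨ u ∈ V0)
    (d : V → ℝ)
    (hdm : ∀ u ∈ Vm, 0 ≤ d u)
    (hd0 : ∀ u ∈ V0, d u = 0) (hdne : d ≠ 0)
    (q : A → ℝ) (π : V → ℝ)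
    (hq : FlowCons src tgt q d) (hπ : PotCoup src tgt Φ q π) :
    ∃ w ∈ Vp, ∀ v : V, π v ≤ π w := by
  classical
  have hΦ0 : ∀ a, Φ a 0 = 0 := by
    intro a; have := hodd a 0; simp at this; linarith
  have hqpos : ∀ a, π (tgt a) < π (src a) → 0 < q a := by
    intro a h
    have : Φ a 0 < Φ a (q a) := by rw [hΦ0, ← hπ a]; linarith
    exact (hmono a).lt_iff_lt.mp this
  have hqzero : ∀ a, π (src a) = π (tgt a) → q a = 0 := by
    intro a h
    have : Φ a (q a) = Φ a 0 := by rw [hΦ0, ← hπ a]; linarith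
    exact (hmono a).injective this
  cases isEmpty_or_nonempty V with
  | inl hE => exact absurd (funext fun u => (hE.false u).elim) hdne
  | inr hne =>
  obtain ⟨w0, -, hw0⟩ := Finset.exists_max_image Finset.univ π Finset.univ_nonempty
  have hw0' : ∀ v : V, π v ≤ π w0 := fun v => hw0 v (Finset.mem_univ v)
  set M := π w0 with hM
  set S : Finset V := Finset.univ.filter (fun u => π u = M) with hS
  have hmemS : ∀ u, u ∈ S ↔ π u = M := by
    intro u; simp [hS]
  -- sum of d over S
  have hsum : ∑ u ∈ S, d u =
      ∑ a : A, ((if tgt a ∈ S then q a else 0) - (if src a ∈ S then q a else 0)) := by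
    rw [Finset.sum_sub_distrib]
    have h1 : ∑ a : A, (if tgt a ∈ S then q a else 0)
        = ∑ u ∈ S, ∑ a : A, (if tgt a = u then q a else 0) := by
      rw [Finset.sum_comm]
      refine Finset.sum_congr rfl fun a _ => ?_
      simp [Finset.sum_ite_eq]
    have h2 : ∑ a : A, (if src a ∈ S then q a else 0)
        = ∑ u ∈ S, ∑ a : A, (if src a = u then q a else 0) := by
      rw [Finset.sum_comm]
      refine Finset.sum_congr rfl fun a _ => ?_
      simp [Finset.sum_ite_eq]
    rw [h1, h2, ← Finset.sum_sub_distrib]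
    exact Finset.sum_congr rfl fun u _ => (hq u).symm
  have hterm : ∀ a : A,
      (if tgt a ∈ S then q a else 0) - (if src a ∈ S then q a else 0) ≤ 0 := by
    intro a
    by_cases h1 : tgt a ∈ S <;> by_cases h2 : src a ∈ S <;> simp [h1, h2]
    · -- tgt ∈ S, src ∉ S : q a ≤ 0
      have hlt : π (src a) < π (tgt a) := by
        rw [(hmemS _).mp h1]
        exact lt_of_le_of_ne (hw0' _) (fun h => h2 ((hmemS _).mpr h))
      have : Φ a (q a) < Φ a 0 := by rw [hΦ0, ← hπ a]; linarith
      exact le_of_lt ((hmono a).lt_iff_lt.mp this)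
    · -- src ∈ S, tgt ∉ S : 0 ≤ q a
      have hlt : π (tgt a) < π (src a) := by
        rw [(hmemS _).mp h2]
        exact lt_of_le_of_ne (hw0' _) (fun h => h1 ((hmemS _).mpr h))
      exact le_of_lt (hqpos a hlt)
  -- case split: S = univ or not
  by_cases hSu : ∀ v : V, v ∈ S
  · -- all potentials equal, all flows zero, d = 0, contradiction
    exfalso
    apply hdne
    funext u
    have hz : ∀ a : A, q a = 0 := by
      intro a
      exact hqzero a (by rw [(hmemS _).mp (hSu (src a)), (hmemS _).mp (hSu (tgt a))])
    have := hq u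
    simp only [hz] at this
    simpa using this.symm
  · push_neg at hSu
    obtain ⟨v, hv⟩ := hSu
    -- find a crossing arc
    have hcross : ∃ a : A, (src a ∈ S ∧ tgt a ∉ S) ∨ (tgt a ∈ S ∧ src a ∉ S) := by
      have hgen : ∀ x y : V, Relation.ReflTransGen
          (fun x y => ∃ a : A, (src a = x ∧ tgt a = y) ∨ (src a = y ∧ tgt a = x)) x y →
          x ∈ S → y ∉ S →
          ∃ a : A, (src a ∈ S ∧ tgt a ∉ S) ∨ (tgt a ∈ S ∧ src a ∉ S) := by
        intro x y h
        induction h with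
        | refl => intro hx hy; exact absurd hx hy
        | @tail b c h1 h2 ih =>
          intro hx hc
          by_cases hb : b ∈ S
          · obtain ⟨a, ha⟩ := h2
            rcases ha with ⟨h3, h4⟩ | ⟨h3, h4⟩
            · exact ⟨a, Or.inl ⟨by rw [h3]; exact hb, by rw [h4]; exact hc⟩⟩
            · exact ⟨a, Or.inr ⟨by rw [h4]; exact hb, by rw [h3]; exact hc⟩⟩
          · exact ih hx hb
      exact hgen w0 v (hconn w0 v) ((hmemS _).mpr rfl) hv
    obtain ⟨a0, ha0⟩ := hcross
    have hstrict : (if tgt a0 ∈ S then q a0 else 0) - (if src a0 ∈ S then q a0 else 0) < 0 := by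
      rcases ha0 with ⟨h1, h2⟩ | ⟨h1, h2⟩
      · simp only [if_pos h1, if_neg h2]
        have hlt : π (tgt a0) < π (src a0) := by
          rw [(hmemS _).mp h1]
          exact lt_of_le_of_ne (hw0' _) (fun h => h2 ((hmemS _).mpr h))
        linarith [hqpos a0 hlt]
      · simp only [if_pos h1, if_neg h2]
        have hlt : π (src a0) < π (tgt a0) := by
          rw [(hmemS _).mp h1]
          exact lt_of_le_of_ne (hw0' _) (fun h => h2 ((hmemS _).mpr h))
        have : Φ a0 (q a0) < Φ a0 0 := by rw [hΦ0, ← hπ a0]; linarith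
        have := (hmono a0).lt_iff_lt.mp this
        linarith
    have hsumneg : ∑ u ∈ S, d u < 0 := by
      rw [hsum]
      calc ∑ a : A, ((if tgt a ∈ S then q a else 0) - (if src a ∈ S then q a else 0))
          < ∑ _a : A, (0:ℝ) :=
            Finset.sum_lt_sum (fun a _ => hterm a) ⟨a0, Finset.mem_univ a0, hstrict⟩
        _ = 0 := by simp
    -- some u ∈ S with d u < 0
    have : ∃ u ∈ S, d u < 0 := by
      by_contra hc
      push_neg at hc
      exact absurd (Finset.sum_nonneg fun u hu => hc u hu) (not_le.mpr hsumneg)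
    obtain ⟨u, huS, hud⟩ := this
    refine ⟨u, ?_, fun v => ((hmemS _).mp huS) ▸ hw0' v⟩
    rcases hcover u with h | h | h
    · exact h
    · exact absurd (hdm u h) (not_le.mpr hud)
    · exact absurd (hd0 u h) (ne_of_lt hud)

/-- For a nonzero balanced load scenario, the maximal potential is attained at
some source node and the minimal potential is attained at some sink node. -/
theorem max_potential_at_source_min_at_sink
    {V A : Type} [Fintype V] [Fintype A] [DecidableEq V]
    (src tgt : A → V) (Φ : A → ℝ → ℝ)
    (hcont : ∀ a, Continuous (Φ a)) (hmono : ∀ a, StrictMono (Φ a))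
    (hodd : ∀ a (x : ℝ), Φ a (-x) = -Φ a x)
    (hconn : WeakConn src tgt)
    (Vp Vm V0 : Finset V)
    (hcover : ∀ u : V, u ∈ Vp ∨ u ∈ Vm ∨ u ∈ V0)
    (hd1 : Disjoint Vp Vm) (hd2 : Disjoint Vp V0) (hd3 : Disjoint Vm V0)
    (d : V → ℝ) (hbal : ∑ u : V, d u = 0)
    (hdp : ∀ u ∈ Vp, d u ≤ 0) (hdm : ∀ u ∈ Vm, 0 ≤ d u)
    (hd0 : ∀ u ∈ V0, d u = 0) (hdne : d ≠ 0)
    (q : A → ℝ) (π : V → ℝ)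
    (hq : FlowCons src tgt q d) (hπ : PotCoup src tgt Φ q π) :
    (∃ w ∈ Vp, ∀ v : V, π v ≤ π w) ∧ (∃ u ∈ Vm, ∀ v : V, π u ≤ π v) := by
  constructor
  · exact key_max src tgt Φ hmono hodd hconn Vp Vm V0 hcover d hdm hd0 hdne q π hq hπ
  · have hdne' : (fun u => -d u) ≠ 0 := by
      intro h
      apply hdne
      funext u
      have := congrFun h u
      simp at this
      simpa using this
    have hq' : FlowCons src tgt (fun a => -q a) (fun u => -d u) := by
      intro u
      have h := hq u
      have e1 : ∀ f : A → V,
          (∑ a : A, if f a = u then -q a else 0) = -∑ a : A, (if f a = u then q a else 0) := by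
        intro f
        rw [← Finset.sum_neg_distrib]
        exact Finset.sum_congr rfl fun a _ => by split <;> simp
      show (∑ a : A, if tgt a = u then -q a else 0)
          - (∑ a : A, if src a = u then -q a else 0) = -d u
      rw [e1, e1]
      linarith
    have hπ' : PotCoup src tgt Φ (fun a => -q a) (fun u => -π u) := by
      intro a
      simp only [hodd]
      have := hπ a
      linarith
    obtain ⟨u, hu, hmax⟩ := key_max src tgt Φ hmono hodd hconn Vm Vp V0
      (fun u => (hcover u).elim (fun h => Or.inr (Or.inl h)) (fun h => h.elim Or.inl
        (fun h => Or.inr (Or.inr h))))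
      (fun u => -d u) (fun u hu => by simpa using hdp u hu)
      (fun u hu => by simpa using hd0 u hu) hdne' (fun a => -q a) (fun u => -π u) hq' hπ'
    exact ⟨u, hu, fun v => by have := hmax v; simpa using this⟩
end

section
/- Under the setup of the robust feasibility characterization on a weakly connected graph: assume for each source w ∈ V₊ the upper potential bound satisfies π⁺_w ≤ π⁺_v for all sinks and inner nodes v ∈ V₋ ∪ V₀, and for each sink u ∈ V₋ the lower potential bound satisfies π⁻_u ≥ π⁻_v for all sources and inner nodes v ∈ V₊ ∪ V₀. Assume further that for every scenario d in the uncertainty set and every potential-based flow (q, π) for d, the maximum of π is attained at some source and the minimum of π is attained at some sink. If φ_{u,v} ≤ π⁺_u − π⁻_v holds for all pairs (u, v) ∈ V₊ × V₋, then φ_{u,v} ≤ π⁺_u − π⁻_v holds for all pairs (u, v) ∈ V × V. -/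
/-- If the worst-case potential-difference bounds hold for all source–sink
pairs, then (under the stated monotonicity assumptions on the potential bounds
and attainment of the extremal potentials at sources/sinks) they hold for all
pairs of nodes. -/
theorem source_sink_pairs_suffice
    {V A : Type} [Fintype V] [Fintype A] [DecidableEq V]
    (src tgt : A → V) (Φ : A → ℝ → ℝ)
    (hcont : ∀ a, Continuous (Φ a)) (hmono : ∀ a, StrictMono (Φ a))
    (hodd : ∀ a (x : ℝ), Φ a (-x) = -Φ a x)
    (hconn : WeakConn src tgt)
    (Vp Vm V0 : Finset V)
    (hcover : ∀ u : V, u ∈ Vp ∨ u ∈ Vm ∨ u ∈ V0)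
    (hd1 : Disjoint Vp Vm) (hd2 : Disjoint Vp V0) (hd3 : Disjoint Vm V0)
    (πlo πhi : V → ℝ) (hπb : ∀ u, πlo u ≤ πhi u)
    (hhi : ∀ w ∈ Vp, ∀ v : V, v ∈ Vm ∪ V0 → πhi w ≤ πhi v)
    (hlo : ∀ u ∈ Vm, ∀ v : V, v ∈ Vp ∪ V0 → πlo v ≤ πlo u)
    (U : Set (V → ℝ)) (hUne : U.Nonempty) (hUcomp : IsCompact U)
    (hUbal : ∀ d ∈ U, ∑ u : V, d u = 0)
    (hattain : ∀ d ∈ U, ∀ (q : A → ℝ) (π : V → ℝ),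
      FlowCons src tgt q d → PotCoup src tgt Φ q π →
      (∃ w ∈ Vp, ∀ v : V, π v ≤ π w) ∧ (∃ u ∈ Vm, ∀ v : V, π u ≤ π v))
    (hpairs : ∀ u ∈ Vp, ∀ v ∈ Vm, ∀ d ∈ U, ∀ (q : A → ℝ) (π : V → ℝ),
      FlowCons src tgt q d → PotCoup src tgt Φ q π →
      π u - π v ≤ πhi u - πlo v) :
    ∀ u v : V, ∀ d ∈ U, ∀ (q : A → ℝ) (π : V → ℝ),
      FlowCons src tgt q d → PotCoup src tgt Φ q π →
      π u - π v ≤ πhi u - πlo v := by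
  intro u v d hd q π hfc hpc
  obtain ⟨⟨w, hw, hwmax⟩, ⟨s, hs, hsmin⟩⟩ := hattain d hd q π hfc hpc
  classical
  -- choose w' : source above u, s' : sink below v
  by_cases hu : u ∈ Vp
  · by_cases hv : v ∈ Vm
    · exact hpairs u hu v hv d hd q π hfc hpc
    · have hv' : v ∈ Vp ∪ V0 := by
        rcases hcover v with h | h | h
        · exact Finset.mem_union_left _ h
        · exact absurd h hv
        · exact Finset.mem_union_right _ h
      have h1 : π u - π v ≤ π u - π s := by linarith [hsmin v]
      have h2 : π u - π s ≤ πhi u - πlo s := hpairs u hu s hs d hd q π hfc hpc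
      have h3 : πlo v ≤ πlo s := hlo s hs v hv'
      linarith
  · have hu' : u ∈ Vm ∪ V0 := by
      rcases hcover u with h | h | h
      · exact absurd h hu
      · exact Finset.mem_union_left _ h
      · exact Finset.mem_union_right _ h
    have hwu : πhi w ≤ πhi u := hhi w hw u hu'
    by_cases hv : v ∈ Vm
    · have h1 : π u - π v ≤ π w - π v := by linarith [hwmax u]
      have h2 : π w - π v ≤ πhi w - πlo v := hpairs w hw v hv d hd q π hfc hpc
      linarith
    · have hv' : v ∈ Vp ∪ V0 := by
        rcases hcover v with h | h | h
        · exact Finset.mem_union_left _ h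
        · exact absurd h hv
        · exact Finset.mem_union_right _ h
      have h2 : π w - π s ≤ πhi w - πlo s := hpairs w hw s hs d hd q π hfc hpc
      have h3 : πlo v ≤ πlo s := hlo s hs v hv'
      linarith [hwmax u, hsmin v]
end

section
/- Let G = (V, A) be a finite directed graph with strictly increasing odd potential functions Φ_a, and let (q, π) be a potential-based flow. Let C be a cycle in the underlying undirected graph with forward arcs C₁ and backward arcs C₂, and for each arc a let y_a ∈ {0,1} be a direction indicator consistent with the flow (y_a = 1 implies q_a ≥ 0 and y_a = 0 implies q_a ≤ 0). If all flows on the cycle arcs are nonzero, then both acyclic inequalities ∑_{a∈C₁} y_a + ∑_{a∈C₂}(1−y_a) ≤ |C| − 1 and ∑_{a∈C₁}(1−y_a) + ∑_{a∈C₂} y_a ≤ |C| − 1 hold. -/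
/-!
Orient every arc of the cycle along the traversal. Summed around the closed walk, the oriented
potential drops `±Φ_a(q_a)` telescope to `0`, so some of them is `≤ 0` and some is `≥ 0`. Since
`Φ_a` is strictly increasing with `Φ_a 0 = 0` and `q_a ≠ 0`, an arc whose oriented drop is `≤ 0`
carries flow against the traversal, so its direction indicator contributes `0` to the first
inequality; symmetrically an arc with oriented drop `≥ 0` contributes `0` to the second. Every
other term is at most `1`.
-/

open Finset

theorem Fin.sum_castSucc_sub_succ {M : Type*} [AddCommGroup M] {n : ℕ} (g : Fin (n + 1) → M) :
    ∑ i : Fin n, (g i.castSucc - g i.succ) = g 0 - g (Fin.last n) := by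
  induction n with
  | zero => simp
  | succ n ih =>
    simp_rw [Fin.sum_univ_castSucc, Fin.succ_castSucc, ih fun i => g i.castSucc]
    simp

theorem sum_le_card_sub_one_of_eq_zero {ι : Type*} [Fintype ι] {t : ι → ℝ} (ht : ∀ i, t i ≤ 1)
    {j : ι} (hj : t j = 0) : ∑ i, t i ≤ Fintype.card ι - 1 := by
  classical
  have hrest : ∑ i ∈ univ.erase j, t i ≤ #(univ.erase j) • (1 : ℝ) :=
    sum_le_card_nsmul _ t 1 fun i _ => ht i
  rw [← add_sum_erase _ _ (mem_univ j), hj, zero_add]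
  rw [card_erase_of_mem (mem_univ j), card_univ, nsmul_eq_mul, mul_one,
    Nat.cast_pred (Fintype.card_pos_iff.2 ⟨j⟩)] at hrest
  exact hrest

section DirectionIndicator

variable {Φ : ℝ → ℝ} (hΦ : StrictMono Φ) (hΦ0 : Φ 0 = 0) {q y : ℝ} (hq : q ≠ 0)
  (hy : (0 < q → y = 1) ∧ (q < 0 → y = 0))
include hΦ hΦ0 hq hy

theorem eq_zero_of_map_nonpos (h : Φ q ≤ 0) : y = 0 :=
  hy.2 <| hq.lt_of_le <| not_lt.1 fun hpos => (hΦ0 ▸ hΦ hpos).not_ge h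

theorem eq_one_of_map_nonneg (h : 0 ≤ Φ q) : y = 1 :=
  hy.1 <| hq.symm.lt_of_le <| not_lt.1 fun hneg => (hΦ0 ▸ hΦ hneg).not_ge h

end DirectionIndicator

theorem sum_orient_le_card_sub_one {ι : Type*} [Fintype ι] [Nonempty ι] (d : ι → Bool)
    (φ y : ι → ℝ) (hy01 : ∀ i, y i = 0 ∨ y i = 1)
    (hφ : ∀ i, (φ i ≤ 0 → y i = 0) ∧ (0 ≤ φ i → y i = 1))
    (hsum : ∑ i, (if d i then φ i else -φ i) = 0) :
    ∑ i, (if d i then y i else 1 - y i) ≤ Fintype.card ι - 1 := by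
  obtain ⟨j, -, hj⟩ : ∃ j ∈ univ, (if d j then φ j else -φ j) ≤ 0 :=
    exists_le_of_sum_le univ_nonempty (by simp [hsum])
  refine sum_le_card_sub_one_of_eq_zero (fun i => ?_) (j := j) ?_
  · rcases hy01 i with h | h <;> cases d i <;> simp [h]
  · cases hd : d j <;> simp only [hd] at hj ⊢
    · simp [(hφ j).2 (by simpa using hj)]
    · exact (hφ j).1 hj

theorem acyclic_inequalities_valid_general {V A : Type}
    (src tgt : A → V) (Φ : A → ℝ → ℝ)
    (hmono : ∀ a, StrictMono (Φ a)) (hodd : ∀ a (x : ℝ), Φ a (-x) = -Φ a x)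
    (q : A → ℝ) (π : V → ℝ)
    (hcoup : ∀ a : A, π (src a) - π (tgt a) = Φ a (q a))
    (y : A → ℝ) (hy01 : ∀ a, y a = 0 ∨ y a = 1)
    (hydir : ∀ a : A, (0 < q a → y a = 1) ∧ (q a < 0 → y a = 0))
    (n : ℕ) (hn : 0 < n) (w : Fin (n + 1) → V) (e : Fin n → A)
    (dir : Fin n → Bool)
    (hclosed : w (Fin.last n) = w 0)
    (hwalk : ∀ i : Fin n,
      if dir i = true then src (e i) = w i.castSucc ∧ tgt (e i) = w i.succ
      else src (e i) = w i.succ ∧ tgt (e i) = w i.castSucc)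
    (hnz : ∀ i : Fin n, q (e i) ≠ 0) :
    (∑ i : Fin n, if dir i = true then y (e i) else 1 - y (e i)) ≤ (n : ℝ) - 1 ∧
    (∑ i : Fin n, if dir i = true then 1 - y (e i) else y (e i)) ≤ (n : ℝ) - 1 := by
  have : Nonempty (Fin n) := Fin.pos_iff_nonempty.mp hn
  set φ : Fin n → ℝ := fun i => Φ (e i) (q (e i))
  have hφ : ∀ i, (φ i ≤ 0 → y (e i) = 0) ∧ (0 ≤ φ i → y (e i) = 1) := fun i =>
    have hΦ0 : Φ (e i) 0 = 0 := Function.Odd.map_zero (hodd (e i))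
    ⟨eq_zero_of_map_nonpos (hmono _) hΦ0 (hnz i) (hydir _),
      eq_one_of_map_nonneg (hmono _) hΦ0 (hnz i) (hydir _)⟩
  have hdrop : ∀ i, (if dir i then φ i else -φ i) = π (w i.castSucc) - π (w i.succ) := by
    intro i
    have h := hwalk i
    cases hd : dir i <;> simp only [hd, φ, Bool.false_eq_true, if_true, if_false] at h ⊢ <;>
      rw [← hcoup, h.1, h.2]
    ring
  have hsum : ∑ i, (if dir i then φ i else -φ i) = 0 := by
    rw [sum_congr rfl fun i _ => hdrop i, Fin.sum_castSucc_sub_succ (fun j => π (w j)), hclosed,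
      sub_self]
  have key : ∀ d : Fin n → Bool, ∑ i, (if d i then φ i else -φ i) = 0 →
      ∑ i, (if d i then y (e i) else 1 - y (e i)) ≤ (n : ℝ) - 1 := fun d hsum =>
    by simpa using sum_orient_le_card_sub_one d φ (y ∘ e) (fun i => hy01 _) hφ hsum
  refine ⟨key dir hsum, ?_⟩
  convert key (fun i => !dir i) ?_ using 2 with i
  · cases dir i <;> rfl
  · rw [← neg_eq_zero, ← hsum, ← sum_neg_distrib]
    congr! 1 with i
    cases dir i <;> simp

/-- The acyclic inequalities for flow-direction variables are valid for
potential-based flows: along any cycle of the underlying undirected graph all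
of whose arcs carry nonzero flow, the direction variables cannot all agree
with either traversal orientation. -/
theorem acyclic_inequalities_valid {V A : Type} [Fintype V] [Fintype A]
    (src tgt : A → V) (Φ : A → ℝ → ℝ)
    (hmono : ∀ a, StrictMono (Φ a)) (hodd : ∀ a (x : ℝ), Φ a (-x) = -Φ a x)
    (q : A → ℝ) (π : V → ℝ)
    (hcoup : ∀ a : A, π (src a) - π (tgt a) = Φ a (q a))
    (y : A → ℝ) (hy01 : ∀ a, y a = 0 ∨ y a = 1)
    (hydir : ∀ a : A, (0 < q a → y a = 1) ∧ (q a < 0 → y a = 0))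
    (n : ℕ) (hn : 0 < n) (w : Fin (n + 1) → V) (e : Fin n → A)
    (dir : Fin n → Bool)
    (hclosed : w (Fin.last n) = w 0)
    (hwalk : ∀ i : Fin n,
      if dir i = true then src (e i) = w i.castSucc ∧ tgt (e i) = w i.succ
      else src (e i) = w i.succ ∧ tgt (e i) = w i.castSucc)
    (hnz : ∀ i : Fin n, q (e i) ≠ 0) :
    (∑ i : Fin n, if dir i = true then y (e i) else 1 - y (e i)) ≤ (n : ℝ) - 1 ∧
    (∑ i : Fin n, if dir i = true then 1 - y (e i) else y (e i)) ≤ (n : ℝ) - 1 :=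
  acyclic_inequalities_valid_general src tgt Φ hmono hodd q π hcoup y hy01 hydir n hn w e dir
    hclosed hwalk hnz
end
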